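/- arXiv:1812.03865 — 4 statements merged into one kernel-verified Lean document; each statement's English description precedes it below -/
import Mathlib

section
/- Under the hypotheses of the previous construction (ξ a solution of (d/ds)((1/κ)ξ') = -κξ + τ√(1-ξ²-((1/κ)ξ')²) with 1-ξ²-((1/κ)ξ')² > 0), the curve α(s) = (∫√(1-ξ²)cos θ ds, ∫√(1-ξ²)sin θ ds, ∫ξ ds), with θ' = κ√(1-ξ²-((1/κ)ξ')²)/(1-ξ²), has curvature |α''(s)| = √(ξ²(ξ')²/(1-ξ²) + κ²(1-ξ²-((1/κ)ξ')²)/(1-ξ²) + (ξ')²) = κ(s). -/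
open Real

/-! The velocity of `α` is `(r cos θ, r sin θ, ξ)` with `r = √(1 - ξ²)`, a unit vector in
cylindrical coordinates. Differentiating once more, the rotation by `θ` drops out of the norm,
so `|α''|² = r'² + (r θ')² + ξ'²`; substituting `r' = -ξξ'/r` and the given `θ'` yields the
stated formula, which collapses to `κ²`. -/

theorem HasDerivAt.toLp {𝕜 ι : Type*} [NontriviallyNormedField 𝕜] [Fintype ι]
    (p : ENNReal) [Fact (1 ≤ p)] {f : 𝕜 → ι → 𝕜} {f' : ι → 𝕜} {s : 𝕜}
    (hf : HasDerivAt f f' s) :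
    HasDerivAt (fun t => WithLp.toLp p (f t)) (WithLp.toLp p f') s :=
  (PiLp.hasFDerivAt_toLp p (f s)).comp_hasDerivAt s hf

theorem HasDerivAt.vec3 {x y z : ℝ → ℝ} {x' y' z' s : ℝ} (hx : HasDerivAt x x' s)
    (hy : HasDerivAt y y' s) (hz : HasDerivAt z z' s) :
    HasDerivAt (fun t => ![x t, y t, z t]) ![x', y', z'] s := by
  refine hasDerivAt_pi.2 fun i => ?_
  fin_cases i
  · exact hx
  · exact hy
  · exact hz

theorem EuclideanSpace.norm_toLp_vec3 (a b c : ℝ) :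
    ‖WithLp.toLp 2 ![a, b, c]‖ = √(a ^ 2 + b ^ 2 + c ^ 2) := by
  simp [EuclideanSpace.norm_eq, Fin.sum_univ_three, sq_abs]

theorem rotate_sq_add_sq (a b φ : ℝ) :
    (a * cos φ - b * sin φ) ^ 2 + (a * sin φ + b * cos φ) ^ 2 = a ^ 2 + b ^ 2 := by
  linear_combination (a ^ 2 + b ^ 2) * sin_sq_add_cos_sq φ

theorem hasDerivAt_cylindrical {r θ h : ℝ → ℝ} {r' θ' h' s : ℝ} (hr : HasDerivAt r r' s)
    (hθ : HasDerivAt θ θ' s) (hh : HasDerivAt h h' s) :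
    HasDerivAt (fun t => ![r t * cos (θ t), r t * sin (θ t), h t])
      ![r' * cos (θ s) - r s * θ' * sin (θ s), r' * sin (θ s) + r s * θ' * cos (θ s), h'] s := by
  refine HasDerivAt.vec3 ?_ ?_ hh
  · exact (hr.fun_mul hθ.cos).congr_deriv (by ring)
  · exact (hr.fun_mul hθ.sin).congr_deriv (by ring)

theorem hasDerivAt_sqrt_one_sub_sq {f : ℝ → ℝ} {f' s : ℝ} (hf : HasDerivAt f f' s)
    (hs : f s ^ 2 < 1) :
    HasDerivAt (fun t => √(1 - f t ^ 2)) (-(f s * f') / √(1 - f s ^ 2)) s := by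
  have hpos : 0 < 1 - f s ^ 2 := by linarith
  refine (((hf.fun_pow 2).const_sub 1).sqrt hpos.ne').congr_deriv ?_
  field_simp
  norm_num
  ring

section CurvatureAlgebra

variable (u v k : ℝ)

theorem accel_sq_eq_curvature_formula (h : u ^ 2 + (v / k) ^ 2 < 1) :
    (-(u * v) / √(1 - u ^ 2)) ^ 2 +
        (√(1 - u ^ 2) * (k * √(1 - u ^ 2 - (v / k) ^ 2) / (1 - u ^ 2))) ^ 2 + v ^ 2 =
      u ^ 2 * v ^ 2 / (1 - u ^ 2) + k ^ 2 * (1 - u ^ 2 - (v / k) ^ 2) / (1 - u ^ 2) + v ^ 2 := by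
  have hP : 0 < 1 - u ^ 2 := by nlinarith [sq_nonneg (v / k)]
  rw [div_pow, mul_pow, div_pow, mul_pow, sq_sqrt hP.le, sq_sqrt (by linarith)]
  field_simp

theorem curvature_formula_eq_sq (hk : k ≠ 0) (hu : u ^ 2 ≠ 1) :
    u ^ 2 * v ^ 2 / (1 - u ^ 2) + k ^ 2 * (1 - u ^ 2 - (v / k) ^ 2) / (1 - u ^ 2) + v ^ 2 =
      k ^ 2 := by
  have hP : 1 - u ^ 2 ≠ 0 := sub_ne_zero.2 hu.symm
  field_simp
  ring

end CurvatureAlgebra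

theorem constructed_curve_curvature_general
    (J : Set ℝ) (hJ : IsOpen J)
    (κ ξ : ℝ → ℝ)
    (hκpos : ∀ s ∈ J, 0 < κ s)
    (hξ : ContDiffOn ℝ 2 ξ J)
    (hcon : ∀ s ∈ J, (ξ s) ^ 2 + (deriv ξ s / κ s) ^ 2 < 1)
    (θ x y z : ℝ → ℝ)
    (hθ : ∀ s ∈ J, HasDerivAt θ
      (κ s * Real.sqrt (1 - (ξ s) ^ 2 - (deriv ξ s / κ s) ^ 2) / (1 - (ξ s) ^ 2)) s)
    (hx : ∀ s ∈ J, HasDerivAt x (Real.sqrt (1 - (ξ s) ^ 2) * Real.cos (θ s)) s)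
    (hy : ∀ s ∈ J, HasDerivAt y (Real.sqrt (1 - (ξ s) ^ 2) * Real.sin (θ s)) s)
    (hz : ∀ s ∈ J, HasDerivAt z (ξ s) s)
    (α : ℝ → EuclideanSpace ℝ (Fin 3))
    (hα : α = fun s => (WithLp.equiv 2 (Fin 3 → ℝ)).symm ![x s, y s, z s]) :
    ∀ s ∈ J,
      ‖deriv (deriv α) s‖ =
        Real.sqrt ((ξ s) ^ 2 * (deriv ξ s) ^ 2 / (1 - (ξ s) ^ 2) +
          (κ s) ^ 2 * (1 - (ξ s) ^ 2 - (deriv ξ s / κ s) ^ 2) / (1 - (ξ s) ^ 2) +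
          (deriv ξ s) ^ 2) ∧
      ‖deriv (deriv α) s‖ = κ s := by
  intro s hs
  have hξ' : ∀ u ∈ J, HasDerivAt ξ (deriv ξ u) u := fun u hu =>
    ((hξ.differentiableOn two_ne_zero u hu).differentiableAt (hJ.mem_nhds hu)).hasDerivAt
  have hξ_sq : ξ s ^ 2 < 1 := by nlinarith [hcon s hs, sq_nonneg (deriv ξ s / κ s)]
  have hvel : deriv α =ᶠ[nhds s] fun u =>
      WithLp.toLp 2 ![√(1 - ξ u ^ 2) * cos (θ u), √(1 - ξ u ^ 2) * sin (θ u), ξ u] := by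
    filter_upwards [hJ.mem_nhds hs] with u hu
    rw [hα, WithLp.equiv_symm_apply]
    exact ((hx u hu).vec3 (hy u hu) (hz u hu)).toLp 2 |>.deriv
  have hacc := (hasDerivAt_cylindrical (hasDerivAt_sqrt_one_sub_sq (hξ' s hs) hξ_sq)
    (hθ s hs) (hξ' s hs)).toLp 2
  have hnorm : ‖deriv (deriv α) s‖ = √((ξ s) ^ 2 * (deriv ξ s) ^ 2 / (1 - (ξ s) ^ 2) +
      (κ s) ^ 2 * (1 - (ξ s) ^ 2 - (deriv ξ s / κ s) ^ 2) / (1 - (ξ s) ^ 2) +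
      (deriv ξ s) ^ 2) := by
    rw [hvel.deriv_eq, hacc.deriv, EuclideanSpace.norm_toLp_vec3, rotate_sq_add_sq,
      accel_sq_eq_curvature_formula _ _ _ (hcon s hs)]
  refine ⟨hnorm, ?_⟩
  rw [hnorm, curvature_formula_eq_sq _ _ _ (hκpos s hs).ne' hξ_sq.ne,
    sqrt_sq (hκpos s hs).le]

/-- The curve built from a solution `ξ` of the nonlinear ODE has curvature
`|α''| = √(ξ²ξ'²/(1-ξ²) + κ²(1-ξ²-((1/κ)ξ')²)/(1-ξ²) + ξ'²) = κ`. -/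
theorem constructed_curve_curvature
    (J : Set ℝ) (hJ : IsOpen J) (hJc : J.OrdConnected)
    (κ τ ξ : ℝ → ℝ)
    (hκ : ContDiffOn ℝ 1 κ J) (hκpos : ∀ s ∈ J, 0 < κ s)
    (hτ : ContinuousOn τ J)
    (hξ : ContDiffOn ℝ 2 ξ J)
    (hcon : ∀ s ∈ J, (ξ s) ^ 2 + (deriv ξ s / κ s) ^ 2 < 1)
    (hode : ∀ s ∈ J, deriv (fun u => deriv ξ u / κ u) s =
      -κ s * ξ s + τ s * Real.sqrt (1 - (ξ s) ^ 2 - (deriv ξ s / κ s) ^ 2))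
    (θ x y z : ℝ → ℝ)
    (hθ : ∀ s ∈ J, HasDerivAt θ
      (κ s * Real.sqrt (1 - (ξ s) ^ 2 - (deriv ξ s / κ s) ^ 2) / (1 - (ξ s) ^ 2)) s)
    (hx : ∀ s ∈ J, HasDerivAt x (Real.sqrt (1 - (ξ s) ^ 2) * Real.cos (θ s)) s)
    (hy : ∀ s ∈ J, HasDerivAt y (Real.sqrt (1 - (ξ s) ^ 2) * Real.sin (θ s)) s)
    (hz : ∀ s ∈ J, HasDerivAt z (ξ s) s)
    (α : ℝ → EuclideanSpace ℝ (Fin 3))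
    (hα : α = fun s => (WithLp.equiv 2 (Fin 3 → ℝ)).symm ![x s, y s, z s]) :
    ∀ s ∈ J,
      ‖deriv (deriv α) s‖ =
        Real.sqrt ((ξ s) ^ 2 * (deriv ξ s) ^ 2 / (1 - (ξ s) ^ 2) +
          (κ s) ^ 2 * (1 - (ξ s) ^ 2 - (deriv ξ s / κ s) ^ 2) / (1 - (ξ s) ^ 2) +
          (deriv ξ s) ^ 2) ∧
      ‖deriv (deriv α) s‖ = κ s :=
  constructed_curve_curvature_general J hJ κ ξ hκpos hξ hcon θ x y z hθ hx hy hz α hα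
end

section
/- (Fundamental theorem of space curves, existence) Given a differentiable function κ(s) > 0 and a continuous function τ(s) on (a,b), there exists an open subinterval J and a regular curve α : J → ℝ³ parametrized by arc length whose curvature is κ(s) and whose torsion is τ(s). -/
/-!
Solve the Frenet–Serret system `(α, T, N, B)' = (T, κ N, -κ T + τ B, -τ N)`, a linear ODE with
continuous coefficients, near an interior point by Picard–Lindelöf, starting from the standard
frame. Since the coefficient matrix of `(T, N, B)` is skew-symmetric, the distance of the Gram
matrix of `(T, N, B)` to the identity and the triple product `⟪T × N, B⟫` have zero derivative, so
the frame stays orthonormal and positively oriented. Then `α' = T`, `α'' = κ N` and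
`α''' = κ (-κ T + τ B) + κ' N`, which give unit speed, curvature `κ` and torsion `τ`.
-/

open Real
open scoped RealInnerProductSpace

/-- Cross product on `ℝ³` (Euclidean space). -/
noncomputable def cross3 (u v : EuclideanSpace ℝ (Fin 3)) : EuclideanSpace ℝ (Fin 3) :=
  (WithLp.equiv 2 (Fin 3 → ℝ)).symm
    ![u 1 * v 2 - u 2 * v 1, u 2 * v 0 - u 0 * v 2, u 0 * v 1 - u 1 * v 0]

open Set
open scoped NNReal

local notation "ℝ³" => EuclideanSpace ℝ (Fin 3)

section CrossProduct

theorem real_inner_fin_three (u v : ℝ³) : ⟪u, v⟫ = u 0 * v 0 + u 1 * v 1 + u 2 * v 2 := by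
  simp [PiLp.inner_apply, Fin.sum_univ_three]; ring

theorem inner_cross3 (u v w : ℝ³) :
    ⟪cross3 u v, w⟫ = (u 1 * v 2 - u 2 * v 1) * w 0 + (u 2 * v 0 - u 0 * v 2) * w 1
      + (u 0 * v 1 - u 1 * v 0) * w 2 := by
  simp [real_inner_fin_three, cross3]

theorem norm_cross3_sq (u v : ℝ³) : ‖cross3 u v‖ ^ 2 = ‖u‖ ^ 2 * ‖v‖ ^ 2 - ⟪u, v⟫ ^ 2 := by
  simp only [← real_inner_self_eq_norm_sq, real_inner_fin_three]
  simp [cross3]; ring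

theorem HasDerivAt.inner_cross3 {u v w : ℝ → ℝ³} {u' v' w' : ℝ³} {t : ℝ}
    (hu : HasDerivAt u u' t) (hv : HasDerivAt v v' t) (hw : HasDerivAt w w' t) :
    HasDerivAt (fun s => ⟪cross3 (u s) (v s), w s⟫)
      (⟪cross3 u' (v t), w t⟫ + ⟪cross3 (u t) v', w t⟫ + ⟪cross3 (u t) (v t), w'⟫) t := by
  have hc {f : ℝ → ℝ³} {f' : ℝ³} (hf : HasDerivAt f f' t) (i : Fin 3) :
      HasDerivAt (fun s => f s i) (f' i) t := by
    simpa [Function.comp_def] using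
      (EuclideanSpace.proj (𝕜 := ℝ) i).hasFDerivAt.comp_hasDerivAt t hf
  have H := ((((hc hu 1).mul (hc hv 2)).sub ((hc hu 2).mul (hc hv 1))).mul (hc hw 0)).add
    ((((hc hu 2).mul (hc hv 0)).sub ((hc hu 0).mul (hc hv 2))).mul (hc hw 1)) |>.add
    ((((hc hu 0).mul (hc hv 1)).sub ((hc hu 1).mul (hc hv 0))).mul (hc hw 2))
  simp only [_root_.inner_cross3]
  exact H.congr_deriv (by simp only [Pi.mul_apply, Pi.sub_apply]; ring)

end CrossProduct

section Calculus

variable {F : Type*} [NormedAddCommGroup F] [NormedSpace ℝ F] {U : Set ℝ}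

theorem IsOpen.is_const_of_hasDerivAt_zero (hU : IsOpen U) (hU' : IsPreconnected U)
    {f : ℝ → F} (hf : ∀ s ∈ U, HasDerivAt f 0 s) {x y : ℝ} (hx : x ∈ U) (hy : y ∈ U) :
    f x = f y :=
  hU.is_const_of_deriv_eq_zero hU' (fun s hs => (hf s hs).differentiableAt.differentiableWithinAt)
    (fun s hs => (hf s hs).deriv) hx hy

theorem contDiffOn_succ_of_hasDerivAt {f f' : ℝ → F} (hU : IsOpen U)
    (hf : ∀ s ∈ U, HasDerivAt f (f' s) s) {n : ℕ} (hf' : ContDiffOn ℝ n f' U) :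
    ContDiffOn ℝ (n + 1 : ℕ) f U :=
  (contDiffOn_succ_iff_deriv_of_isOpen hU).2
    ⟨fun s hs => (hf s hs).differentiableAt.differentiableWithinAt, by simp,
      hf'.congr fun s hs => (hf s hs).deriv⟩

theorem exists_hasDerivAt_linear_ode [CompleteSpace F] {A : ℝ → F →L[ℝ] F} (hU : IsOpen U)
    (hA : ContinuousOn A U) {t₀ : ℝ} (ht₀ : t₀ ∈ U) (x₀ : F) :
    ∃ ε > 0, Ioo (t₀ - ε) (t₀ + ε) ⊆ U ∧
      ∃ x : ℝ → F, x t₀ = x₀ ∧ ∀ t ∈ Ioo (t₀ - ε) (t₀ + ε), HasDerivAt x (A t (x t)) t := by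
  obtain ⟨δ, hδ, hδU⟩ : ∃ δ > 0, Icc (t₀ - δ) (t₀ + δ) ⊆ U := by
    obtain ⟨δ, hδ, h⟩ := Metric.nhds_basis_closedBall.mem_iff.1 (hU.mem_nhds ht₀)
    exact ⟨δ, hδ, by rwa [← Real.closedBall_eq_Icc]⟩
  obtain ⟨C, hC⟩ := isCompact_Icc.exists_bound_of_continuousOn (hA.mono hδU)
  set K : ℝ≥0 := C.toNNReal
  set L : ℝ≥0 := K * (‖x₀‖₊ + 1)
  set ε : ℝ := min δ (1 / (L + 1))
  have hε : 0 < ε := lt_min hδ (by positivity)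
  have hεδ : Icc (t₀ - ε) (t₀ + ε) ⊆ Icc (t₀ - δ) (t₀ + δ) :=
    Icc_subset_Icc (by linarith [min_le_left δ (1 / (L + 1))])
      (by linarith [min_le_left δ (1 / (L + 1))])
  have hAK : ∀ t ∈ Icc (t₀ - ε) (t₀ + ε), ‖A t‖ ≤ K := fun t ht =>
    (hC t (hεδ ht)).trans (le_coe_toNNReal C)
  have hpl : IsPicardLindelof (fun t => A t) (tmin := t₀ - ε) (tmax := t₀ + ε)
      ⟨t₀, by constructor <;> linarith⟩ x₀ 1 0 L K := by
    refine ⟨fun t ht => ((A t).lipschitz.weaken (hAK t ht)).lipschitzOnWith,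
      fun x _ => (hA.mono (hεδ.trans hδU)).clm_apply continuousOn_const, fun t ht x hx => ?_, ?_⟩
    · have hx' : ‖x‖ ≤ ‖x₀‖ + 1 := by
        rw [mem_closedBall_iff_norm, NNReal.coe_one] at hx
        linarith [norm_le_norm_add_norm_sub' x x₀]
      calc ‖A t x‖ ≤ ‖A t‖ * ‖x‖ := (A t).le_opNorm x
        _ ≤ K * (‖x₀‖ + 1) := by gcongr; exact hAK t ht
        _ = L := by simp [L]
    · simp only [add_sub_cancel_left, sub_sub_cancel, max_self, NNReal.coe_one,
        NNReal.coe_zero, sub_zero]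
      calc (L : ℝ) * ε ≤ L * (1 / (L + 1)) := by gcongr; exact min_le_right _ _
        _ ≤ 1 := by rw [mul_one_div, div_le_one (by positivity)]; linarith
  obtain ⟨x, hx₀, hx⟩ := hpl.exists_eq_forall_mem_Icc_hasDerivWithinAt₀
  exact ⟨ε, hε, Ioo_subset_Icc_self.trans (hεδ.trans hδU), x, hx₀, fun t ht =>
    (hx t (Ioo_subset_Icc_self ht)).hasDerivAt (Icc_mem_nhds ht.1 ht.2)⟩

end Calculus

section FrenetSerret

variable {E : Type*} [NormedAddCommGroup E] [NormedSpace ℝ E]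

-- The first slot carries the curve `α` itself, so that solving the system also integrates `T`.
noncomputable def frenetSerret (k t : ℝ) : (Fin 4 → E) →L[ℝ] Fin 4 → E :=
  .pi ![.proj 1, 0, 0, 0] + k • .pi ![0, .proj 2, -.proj 1, 0] +
    t • .pi ![0, 0, .proj 3, -.proj 2]

@[simp]
theorem frenetSerret_apply (k t : ℝ) (x : Fin 4 → E) :
    frenetSerret k t x = ![x 1, k • x 2, -k • x 1 + t • x 3, -t • x 2] := by
  ext i
  fin_cases i <;> simp [frenetSerret]

theorem ContinuousOn.frenetSerret {κ τ : ℝ → ℝ} {U : Set ℝ} (hκ : ContinuousOn κ U)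
    (hτ : ContinuousOn τ U) : ContinuousOn (fun s => frenetSerret (E := E) (κ s) (τ s)) U :=
  (continuousOn_const.add (hκ.smul continuousOn_const)).add (hτ.smul continuousOn_const)

def SolvesFrenetSerret (κ τ : ℝ → ℝ) (T N B : ℝ → E) (U : Set ℝ) : Prop :=
  ∀ s ∈ U, HasDerivAt T (κ s • N s) s ∧ HasDerivAt N (-κ s • T s + τ s • B s) s ∧
    HasDerivAt B (-τ s • N s) s

variable {κ τ : ℝ → ℝ} {T N B : ℝ → E} {U : Set ℝ}

theorem solvesFrenetSerret_of_hasDerivAt {x : ℝ → Fin 4 → E}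
    (hx : ∀ s ∈ U, HasDerivAt x (frenetSerret (κ s) (τ s) (x s)) s) :
    (∀ s ∈ U, HasDerivAt (x · 0) (x s 1) s) ∧
      SolvesFrenetSerret κ τ (x · 1) (x · 2) (x · 3) U := by
  have hc (s) (hs : s ∈ U) (i : Fin 4) := hasDerivAt_pi.1 (hx s hs) i
  exact ⟨fun s hs => by simpa using hc s hs 0,
    fun s hs => ⟨by simpa using hc s hs 1, by simpa using hc s hs 2, by simpa using hc s hs 3⟩⟩

theorem SolvesFrenetSerret.contDiffOn_three {α : ℝ → E} (h : SolvesFrenetSerret κ τ T N B U)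
    (hU : IsOpen U) (hα : ∀ s ∈ U, HasDerivAt α (T s) s) (hκ : ContDiffOn ℝ 1 κ U)
    (hτ : ContinuousOn τ U) : ContDiffOn ℝ 3 α U := by
  have hT : ContinuousOn T U := fun s hs => (h s hs).1.continuousAt.continuousWithinAt
  have hB : ContinuousOn B U := fun s hs => (h s hs).2.2.continuousAt.continuousWithinAt
  have hN : ContDiffOn ℝ 1 N U := by
    simpa using contDiffOn_succ_of_hasDerivAt (n := 0) hU (fun s hs => (h s hs).2.1)
      (contDiffOn_zero.2 ((hκ.continuousOn.neg.smul hT).add (hτ.smul hB)))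
  have hT2 : ContDiffOn ℝ 2 T U := by
    simpa using contDiffOn_succ_of_hasDerivAt (n := 1) hU (fun s hs => (h s hs).1) (hκ.smul hN)
  simpa using contDiffOn_succ_of_hasDerivAt (n := 2) hU hα hT2

theorem SolvesFrenetSerret.derivs_eq {α : ℝ → E} (h : SolvesFrenetSerret κ τ T N B U)
    (hU : IsOpen U) (hα : ∀ s ∈ U, HasDerivAt α (T s) s) (hκ : DifferentiableOn ℝ κ U) {s : ℝ}
    (hs : s ∈ U) : deriv α s = T s ∧ deriv (deriv α) s = κ s • N s ∧
      deriv (deriv (deriv α)) s = κ s • (-κ s • T s + τ s • B s) + deriv κ s • N s := by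
  have h1 : EqOn (deriv α) T U := fun s hs => (hα s hs).deriv
  have h2 : EqOn (deriv (deriv α)) (fun s => κ s • N s) U := fun s hs => by
    rw [(h1.eventuallyEq_of_mem (hU.mem_nhds hs)).deriv_eq, (h s hs).1.deriv]
  refine ⟨h1 hs, h2 hs, ?_⟩
  rw [(h2.eventuallyEq_of_mem (hU.mem_nhds hs)).deriv_eq]
  exact ((hκ.differentiableAt (hU.mem_nhds hs)).hasDerivAt.smul (h s hs).2.1).deriv

end FrenetSerret

section FrenetFrame

variable {E : Type*} [NormedAddCommGroup E] [InnerProductSpace ℝ E]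

-- Squared Frobenius distance from the Gram matrix of `(u, v, w)` to the identity.
def gramDefect (u v w : E) : ℝ :=
  (⟪u, u⟫ - 1) ^ 2 + (⟪v, v⟫ - 1) ^ 2 + (⟪w, w⟫ - 1) ^ 2 +
    2 * (⟪u, v⟫ ^ 2 + ⟪u, w⟫ ^ 2 + ⟪v, w⟫ ^ 2)

theorem orthonormal_iff_gramDefect_eq_zero (u v w : E) :
    Orthonormal ℝ ![u, v, w] ↔ gramDefect u v w = 0 := by
  rw [orthonormal_iff_ite, gramDefect]
  constructor
  · intro h
    have := h 0 0; have := h 1 1; have := h 2 2; have := h 0 1; have := h 0 2; have := h 1 2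
    simp_all [-inner_self_eq_norm_sq_to_K]
  · intro h i j
    have h' : ⟪u, u⟫ = 1 ∧ ⟪v, v⟫ = 1 ∧ ⟪w, w⟫ = 1 ∧ ⟪u, v⟫ = 0 ∧ ⟪u, w⟫ = 0 ∧ ⟪v, w⟫ = 0 := by
      refine ⟨?_, ?_, ?_, ?_, ?_, ?_⟩ <;>
        nlinarith [sq_nonneg (⟪u, u⟫ - 1), sq_nonneg (⟪v, v⟫ - 1), sq_nonneg (⟪w, w⟫ - 1),
          sq_nonneg ⟪u, v⟫, sq_nonneg ⟪u, w⟫, sq_nonneg ⟪v, w⟫]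
    fin_cases i <;> fin_cases j <;> simp [h', real_inner_comm, -inner_self_eq_norm_sq_to_K]

variable {κ τ : ℝ → ℝ} {T N B : ℝ → E} {U : Set ℝ}

theorem SolvesFrenetSerret.hasDerivAt_gramDefect (h : SolvesFrenetSerret κ τ T N B U) {s : ℝ}
    (hs : s ∈ U) : HasDerivAt (fun s => gramDefect (T s) (N s) (B s)) 0 s := by
  obtain ⟨hT, hN, hB⟩ := h s hs
  have H := ((((hT.inner ℝ hT).sub_const 1).pow 2).add (((hN.inner ℝ hN).sub_const 1).pow 2)).add
    (((hB.inner ℝ hB).sub_const 1).pow 2) |>.add <| HasDerivAt.const_mul 2 <|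
    (((hT.inner ℝ hN).pow 2).add ((hT.inner ℝ hB).pow 2)).add ((hN.inner ℝ hB).pow 2)
  refine H.congr_deriv ?_
  simp only [inner_add_left, inner_add_right, inner_smul_left, inner_smul_right,
    real_inner_comm (T s) (N s), real_inner_comm (N s) (B s), RCLike.conj_to_real]
  ring

theorem SolvesFrenetSerret.orthonormal (h : SolvesFrenetSerret κ τ T N B U) (hU : IsOpen U)
    (hU' : IsPreconnected U) {s₀ s : ℝ} (hs₀ : s₀ ∈ U) (hs : s ∈ U)
    (h₀ : Orthonormal ℝ ![T s₀, N s₀, B s₀]) : Orthonormal ℝ ![T s, N s, B s] := by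
  rw [orthonormal_iff_gramDefect_eq_zero] at h₀ ⊢
  rw [← h₀]
  exact hU.is_const_of_hasDerivAt_zero hU' (fun _ => h.hasDerivAt_gramDefect) hs hs₀

end FrenetFrame

section SpaceCurve

theorem SolvesFrenetSerret.inner_cross3_eq {κ τ : ℝ → ℝ} {T N B : ℝ → ℝ³} {U : Set ℝ}
    (h : SolvesFrenetSerret κ τ T N B U) (hU : IsOpen U) (hU' : IsPreconnected U) {s₀ s : ℝ}
    (hs₀ : s₀ ∈ U) (hs : s ∈ U) : ⟪cross3 (T s) (N s), B s⟫ = ⟪cross3 (T s₀) (N s₀), B s₀⟫ := by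
  refine hU.is_const_of_hasDerivAt_zero hU' (f := fun s => ⟪cross3 (T s) (N s), B s⟫)
    (fun t ht => ?_) hs hs₀
  obtain ⟨hT, hN, hB⟩ := h t ht
  refine (hT.inner_cross3 hN hB).congr_deriv ?_
  simp only [inner_cross3, PiLp.add_apply, PiLp.smul_apply, smul_eq_mul]
  ring

theorem curvature_torsion_of_frenet {T N B : ℝ³} (hon : Orthonormal ℝ ![T, N, B])
    (hor : ⟪cross3 T N, B⟫ = 1) {k : ℝ} (hk : 0 < k) (t k' : ℝ) :
    ‖T‖ = 1 ∧ ‖k • N‖ = k ∧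
      ⟪cross3 T (k • N), k • (-k • T + t • B) + k' • N⟫ / ‖cross3 T (k • N)‖ ^ 2 = t := by
  have hT : ‖T‖ = 1 := by simpa using hon.1 0
  have hN : ‖N‖ = 1 := by simpa using hon.1 1
  have hTN : ⟪T, N⟫ = 0 := by simpa using hon.2 (show (0 : Fin 3) ≠ 1 by decide)
  have hnum : ⟪cross3 T (k • N), k • (-k • T + t • B) + k' • N⟫ =
      k ^ 2 * t * ⟪cross3 T N, B⟫ := by
    simp only [inner_cross3, PiLp.add_apply, PiLp.smul_apply, smul_eq_mul]
    ring
  have hden : ‖cross3 T (k • N)‖ ^ 2 = k ^ 2 := by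
    rw [norm_cross3_sq, norm_smul, inner_smul_right, hT, hTN, Real.norm_of_nonneg hk.le, hN]
    ring
  refine ⟨hT, by rw [norm_smul, hN, Real.norm_of_nonneg hk.le, mul_one], ?_⟩
  rw [hnum, hden, hor]
  field_simp

end SpaceCurve

/-- Fundamental theorem of space curves, existence: given `κ > 0` differentiable and `τ`
continuous on `(a,b)`, there is an open subinterval `J` and a unit-speed curve `α : J → ℝ³`
with curvature `κ` and torsion `τ`. -/
theorem fundamental_theorem_existence
    (a b : ℝ) (hab : a < b) (κ τ : ℝ → ℝ)
    (hκ : ContDiffOn ℝ 1 κ (Set.Ioo a b))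
    (hκpos : ∀ s ∈ Set.Ioo a b, 0 < κ s)
    (hτ : ContinuousOn τ (Set.Ioo a b)) :
    ∃ J : Set ℝ, IsOpen J ∧ J.OrdConnected ∧ J.Nonempty ∧ J ⊆ Set.Ioo a b ∧
      ∃ α : ℝ → EuclideanSpace ℝ (Fin 3), ContDiffOn ℝ 3 α J ∧
        ∀ s ∈ J, ‖deriv α s‖ = 1 ∧ ‖deriv (deriv α) s‖ = κ s ∧
          ⟪cross3 (deriv α s) (deriv (deriv α) s), deriv (deriv (deriv α)) s⟫ /
            ‖cross3 (deriv α s) (deriv (deriv α) s)‖ ^ 2 = τ s := by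
  obtain ⟨s₀, hs₀⟩ := nonempty_Ioo.2 hab
  let e (i : Fin 3) : ℝ³ := EuclideanSpace.single i 1
  obtain ⟨ε, hε, hJ, x, hx₀, hx⟩ := exists_hasDerivAt_linear_ode isOpen_Ioo
    (hκ.continuousOn.frenetSerret hτ) hs₀ ![0, e 0, e 1, e 2]
  obtain ⟨hα, hF⟩ := solvesFrenetSerret_of_hasDerivAt hx
  have hs₀J : s₀ ∈ Ioo (s₀ - ε) (s₀ + ε) := ⟨by linarith, by linarith⟩
  refine ⟨_, isOpen_Ioo, ordConnected_Ioo, ⟨s₀, hs₀J⟩, hJ, (x · 0),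
    hF.contDiffOn_three isOpen_Ioo hα (hκ.mono hJ) (hτ.mono hJ), fun s hs => ?_⟩
  have hon := hF.orthonormal isOpen_Ioo isPreconnected_Ioo hs₀J hs (by
    have he : ![e 0, e 1, e 2] = e := by ext i : 1; fin_cases i <;> rfl
    simpa [hx₀, he] using EuclideanSpace.orthonormal_single (𝕜 := ℝ) (ι := Fin 3))
  have hor := hF.inner_cross3_eq isOpen_Ioo isPreconnected_Ioo hs₀J hs
  obtain ⟨h1, h2, h3⟩ := hF.derivs_eq isOpen_Ioo hα
    ((hκ.differentiableOn one_ne_zero).mono hJ) hs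
  rw [h1, h2, h3]
  exact curvature_torsion_of_frenet hon (by simp [hor, hx₀, e, inner_cross3])
    (hκpos s (hJ hs)) _ _
end

section
/- Let α be a unit-speed curve with curvature κ(s) ≠ 0 and torsion τ(s) and Frenet frame (t,n,b). If α is a slant helix, i.e. there is a fixed unit vector U with ⟨n(s),U⟩ = δ constant, then w = ⟨t,U⟩ satisfies w² = (1-δ²)(τ/κ)²/(1+(τ/κ)²), and moreover σ(s) = (κ²/(κ²+τ²)^{3/2})·(τ/κ)' is the constant ±δ/√(1-δ²). -/
open Real
open Filter Topology
open scoped RealInnerProductSpace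

/-!
With `w = ⟪t, U⟫`, `y = ⟪b, U⟫` and `m = τ / κ`: differentiating `⟪n, U⟫ = δ` gives `w = m y`,
and expanding `U` in the frame gives `w² + δ² + y² = 1`, hence `y² (1 + m²) = 1 - δ²`.
Differentiating `w = m y` with `w' = κ δ`, `y' = -τ δ` gives `m' y = δ κ (1 + m²)`, so
`σ = δ / (y √(1 + m²))`; since `y` never vanishes on the interval it has a constant sign `ε`,
and `|y| √(1 + m²) = √(1 - δ²)`.
-/

section InnerProductSpace

variable {E : Type*} [NormedAddCommGroup E] [InnerProductSpace ℝ E]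

theorem Orthonormal.sum_sq_inner_right_of_card_eq_finrank {ι : Type*} [Fintype ι] [Nonempty ι]
    [FiniteDimensional ℝ E] {v : ι → E} (hv : Orthonormal ℝ v)
    (hcard : Fintype.card ι = Module.finrank ℝ E) (x : E) :
    ∑ i, ⟪v i, x⟫ ^ 2 = ‖x‖ ^ 2 := by
  let B := basisOfOrthonormalOfCardEqFinrank hv hcard
  have hB : ⇑B = v := coe_basisOfOrthonormalOfCardEqFinrank hv hcard
  simpa only [Module.Basis.coe_toOrthonormalBasis, hB] using
    (B.toOrthonormalBasis (hB ▸ hv)).sum_sq_inner_right x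

theorem orthonormal_vecCons_three {u v w : E} (hu : ‖u‖ = 1) (hv : ‖v‖ = 1) (hw : ‖w‖ = 1)
    (huv : ⟪u, v⟫ = 0) (huw : ⟪u, w⟫ = 0) (hvw : ⟪v, w⟫ = 0) :
    Orthonormal ℝ ![u, v, w] := by
  rw [orthonormal_iff_ite]
  intro i j
  fin_cases i <;> fin_cases j <;>
    simp [hu, hv, hw, huv, huw, hvw, real_inner_comm u, real_inner_comm v]

theorem HasDerivAt.inner_const_right {f : ℝ → E} {f' : E} {s : ℝ} (hf : HasDerivAt f f' s)
    (U : E) : HasDerivAt (fun u => ⟪f u, U⟫) ⟪f', U⟫ s := by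
  simpa using hf.inner ℝ (hasDerivAt_const s U)

theorem mul_inner_tangent_eq_mul_inner_binormal {t n b : ℝ → E} {U : E} {s κ τ δ : ℝ}
    (hn : HasDerivAt n (-κ • t s + τ • b s) s)
    (hslant : (fun u => ⟪n u, U⟫) =ᶠ[𝓝 s] fun _ => δ) :
    κ * ⟪t s, U⟫ = τ * ⟪b s, U⟫ := by
  have h := ((hasDerivAt_const s δ).congr_of_eventuallyEq hslant).unique (hn.inner_const_right U)
  rw [inner_add_left, real_inner_smul_left, real_inner_smul_left] at h
  linarith

theorem deriv_div_mul_inner_binormal {t n b : ℝ → E} {U : E} {κ τ : ℝ → ℝ} {s m' δ : ℝ}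
    (hκ : κ s ≠ 0)
    (ht : HasDerivAt t (κ s • n s) s) (hb : HasDerivAt b (-τ s • n s) s)
    (hm : HasDerivAt (fun u => τ u / κ u) m' s) (hslant : ⟪n s, U⟫ = δ)
    (hrel : (fun u => ⟪t u, U⟫) =ᶠ[𝓝 s] fun u => τ u / κ u * ⟪b u, U⟫) :
    m' * ⟪b s, U⟫ = δ * κ s * (1 + (τ s / κ s) ^ 2) := by
  have h := (ht.inner_const_right U).unique
    ((hm.mul (hb.inner_const_right U)).congr_of_eventuallyEq hrel)
  simp only [real_inner_smul_left, neg_mul, mul_neg, hslant] at h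
  rw [show m' * ⟪b s, U⟫ = κ s * δ + τ s / κ s * (τ s * δ) by linarith]
  field_simp

end InnerProductSpace

theorem IsPreconnected.exists_abs_eq_sign_mul {S : Set ℝ} {y : ℝ → ℝ} (hS : IsPreconnected S)
    (hy : ContinuousOn y S) (hy0 : ∀ s ∈ S, y s ≠ 0) :
    ∃ ε : ℝ, (ε = 1 ∨ ε = -1) ∧ ∀ s ∈ S, |y s| = ε * y s := by
  rcases hS.eq_or_eq_neg_of_sq_eq hy.abs hy (fun s _ => sq_abs (y s)) (hy0 _ ·) with h | h
  · exact ⟨1, .inl rfl, fun s hs => by simp [h hs]⟩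
  · exact ⟨-1, .inr rfl, fun s hs => by simp [h hs]⟩

theorem rpow_three_halves_sq_add_sq {κ : ℝ} (hκ : 0 < κ) (τ : ℝ) :
    (κ ^ 2 + τ ^ 2) ^ ((3 : ℝ) / 2) = κ ^ 3 * ((1 + (τ / κ) ^ 2) * √(1 + (τ / κ) ^ 2)) := by
  have hA : 0 ≤ 1 + (τ / κ) ^ 2 := by positivity
  have h : κ ^ 2 + τ ^ 2 = κ ^ 2 * (1 + (τ / κ) ^ 2) := by field_simp
  rw [h, Real.mul_rpow (by positivity) hA, show ((3 : ℝ) / 2) = 1 + 1 / 2 by norm_num,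
    Real.rpow_add' hA (by norm_num), Real.rpow_one, ← Real.sqrt_eq_rpow,
    Real.rpow_add' (by positivity) (by norm_num), Real.rpow_one, ← Real.sqrt_eq_rpow,
    Real.sqrt_sq hκ.le]
  ring

theorem sq_div_rpow_three_halves_mul_eq {κ τ m' y δ ε : ℝ} (hκ : 0 < κ) (hy : y ≠ 0)
    (habs : |y| = ε * y) (hnorm : y ^ 2 * (1 + (τ / κ) ^ 2) = 1 - δ ^ 2)
    (hm' : m' * y = δ * κ * (1 + (τ / κ) ^ 2)) :
    κ ^ 2 / (κ ^ 2 + τ ^ 2) ^ ((3 : ℝ) / 2) * m' = ε * δ / √(1 - δ ^ 2) := by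
  have hA : 0 < 1 + (τ / κ) ^ 2 := by positivity
  have hsqrt : √(1 - δ ^ 2) = ε * y * √(1 + (τ / κ) ^ 2) := by
    rw [← hnorm, Real.sqrt_mul (sq_nonneg y), Real.sqrt_sq_eq_abs, habs]
  have hε : ε ≠ 0 := by
    rintro rfl
    simp [hy] at habs
  have hm'' : m' = δ * κ * (1 + (τ / κ) ^ 2) / y := by rw [← hm', mul_div_cancel_right₀ _ hy]
  have hs : 0 < √(1 + (τ / κ) ^ 2) := Real.sqrt_pos.mpr hA
  rw [rpow_three_halves_sq_add_sq hκ, hsqrt, hm'']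
  field_simp

theorem slant_helix_invariant_constant_general
    (I : Set ℝ) (hI : IsOpen I) (hIc : I.OrdConnected)
    (t n b : ℝ → EuclideanSpace ℝ (Fin 3)) (κ τ : ℝ → ℝ)
    (hκ : ∀ s ∈ I, 0 < κ s)
    (hdt : ∀ s ∈ I, DifferentiableAt ℝ t s)
    (hdn : ∀ s ∈ I, DifferentiableAt ℝ n s)
    (hdb : ∀ s ∈ I, DifferentiableAt ℝ b s)
    (hft : ∀ s ∈ I, deriv t s = κ s • n s)
    (hfn : ∀ s ∈ I, deriv n s = -κ s • t s + τ s • b s)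
    (hfb : ∀ s ∈ I, deriv b s = -τ s • n s)
    (hortho : ∀ s ∈ I, ‖t s‖ = 1 ∧ ‖n s‖ = 1 ∧ ‖b s‖ = 1 ∧
      ⟪t s, n s⟫ = 0 ∧ ⟪t s, b s⟫ = 0 ∧ ⟪n s, b s⟫ = 0)
    (hτκ : ∀ s ∈ I, DifferentiableAt ℝ (fun u => τ u / κ u) s)
    (U : EuclideanSpace ℝ (Fin 3)) (hU : ‖U‖ = 1)
    (δ : ℝ) (hδ : |δ| < 1)
    (hslant : ∀ s ∈ I, ⟪n s, U⟫ = δ) :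
    (∀ s ∈ I, ⟪t s, U⟫ ^ 2 = (1 - δ ^ 2) * (τ s / κ s) ^ 2 / (1 + (τ s / κ s) ^ 2)) ∧
      ∃ ε : ℝ, (ε = 1 ∨ ε = -1) ∧
        ∀ s ∈ I, (κ s) ^ 2 / ((κ s) ^ 2 + (τ s) ^ 2) ^ ((3 : ℝ) / 2) *
            deriv (fun u => τ u / κ u) s = ε * δ / Real.sqrt (1 - δ ^ 2) := by
  have hparseval (s : ℝ) (hs : s ∈ I) : ⟪t s, U⟫ ^ 2 + δ ^ 2 + ⟪b s, U⟫ ^ 2 = 1 := by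
    obtain ⟨h1, h2, h3, h4, h5, h6⟩ := hortho s hs
    simpa [Fin.sum_univ_three, hslant s hs, hU] using
      (orthonormal_vecCons_three h1 h2 h3 h4 h5 h6).sum_sq_inner_right_of_card_eq_finrank
        (by simp) U
  have hrel (s : ℝ) (hs : s ∈ I) : ⟪t s, U⟫ = τ s / κ s * ⟪b s, U⟫ := by
    have h := mul_inner_tangent_eq_mul_inner_binormal (hfn s hs ▸ (hdn s hs).hasDerivAt)
      (eventually_of_mem (hI.mem_nhds hs) hslant)
    rw [div_mul_eq_mul_div, eq_div_iff (hκ s hs).ne', mul_comm, h]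
  have hnorm (s : ℝ) (hs : s ∈ I) : ⟪b s, U⟫ ^ 2 * (1 + (τ s / κ s) ^ 2) = 1 - δ ^ 2 := by
    linear_combination hparseval s hs - (⟪t s, U⟫ + τ s / κ s * ⟪b s, U⟫) * hrel s hs
  have hδ2 : δ ^ 2 < 1 := (sq_lt_one_iff_abs_lt_one δ).mpr hδ
  have hb0 (s : ℝ) (hs : s ∈ I) : ⟪b s, U⟫ ≠ 0 := by
    intro h0
    have := hnorm s hs
    rw [h0] at this
    linarith
  obtain ⟨ε, hε, habs⟩ := hIc.isPreconnected.exists_abs_eq_sign_mul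
    (fun s hs => ((hdb s hs).continuousAt.inner continuousAt_const).continuousWithinAt) hb0
  refine ⟨fun s hs => ?_, ε, hε, fun s hs => ?_⟩
  · rw [eq_div_iff (by positivity), hrel s hs]
    linear_combination (τ s / κ s) ^ 2 * hnorm s hs
  · exact sq_div_rpow_three_halves_mul_eq (hκ s hs) (hb0 s hs) (habs s hs) (hnorm s hs)
      (deriv_div_mul_inner_binormal (hκ s hs).ne' (hft s hs ▸ (hdt s hs).hasDerivAt)
        (hfb s hs ▸ (hdb s hs).hasDerivAt) (hτκ s hs).hasDerivAt (hslant s hs)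
        (eventually_of_mem (hI.mem_nhds hs) hrel))

/-- For a slant helix (principal normal makes a constant angle `⟨n,U⟩ = δ`, `|δ| < 1`, with
a fixed unit direction `U`), the function `w = ⟨t,U⟩` satisfies
`w² = (1-δ²)(τ/κ)²/(1+(τ/κ)²)`, and `σ = (κ²/(κ²+τ²)^{3/2})·(τ/κ)'` is the constant
`±δ/√(1-δ²)`. -/
theorem slant_helix_invariant_constant
    (I : Set ℝ) (hI : IsOpen I) (hIc : I.OrdConnected)
    (α t n b : ℝ → EuclideanSpace ℝ (Fin 3)) (κ τ : ℝ → ℝ)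
    (hκ : ∀ s ∈ I, 0 < κ s)
    (hunit : ∀ s ∈ I, ‖deriv α s‖ = 1)
    (ht : ∀ s ∈ I, t s = deriv α s)
    (hdt : ∀ s ∈ I, DifferentiableAt ℝ t s)
    (hdn : ∀ s ∈ I, DifferentiableAt ℝ n s)
    (hdb : ∀ s ∈ I, DifferentiableAt ℝ b s)
    (hft : ∀ s ∈ I, deriv t s = κ s • n s)
    (hfn : ∀ s ∈ I, deriv n s = -κ s • t s + τ s • b s)
    (hfb : ∀ s ∈ I, deriv b s = -τ s • n s)
    (hortho : ∀ s ∈ I, ‖t s‖ = 1 ∧ ‖n s‖ = 1 ∧ ‖b s‖ = 1 ∧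
      ⟪t s, n s⟫ = 0 ∧ ⟪t s, b s⟫ = 0 ∧ ⟪n s, b s⟫ = 0)
    (hτκ : ∀ s ∈ I, DifferentiableAt ℝ (fun u => τ u / κ u) s)
    (U : EuclideanSpace ℝ (Fin 3)) (hU : ‖U‖ = 1)
    (δ : ℝ) (hδ : |δ| < 1)
    (hslant : ∀ s ∈ I, ⟪n s, U⟫ = δ) :
    (∀ s ∈ I, ⟪t s, U⟫ ^ 2 = (1 - δ ^ 2) * (τ s / κ s) ^ 2 / (1 + (τ s / κ s) ^ 2)) ∧
      ∃ ε : ℝ, (ε = 1 ∨ ε = -1) ∧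
        ∀ s ∈ I, (κ s) ^ 2 / ((κ s) ^ 2 + (τ s) ^ 2) ^ ((3 : ℝ) / 2) *
            deriv (fun u => τ u / κ u) s = ε * δ / Real.sqrt (1 - δ ^ 2) :=
  slant_helix_invariant_constant_general I hI hIc t n b κ τ hκ hdt hdn hdb hft hfn hfb hortho hτκ U
    hU δ hδ hslant
end

section
/- Let κ be C¹ and positive and suppose (κ²/(κ²+τ²)^{3/2})·(τ/κ)' = m for a nonzero constant m, with τ/κ ≥ 0. Then τ can be expressed as τ(s) = κ(s)·((m∫₀ˢκ + A)²/(1-(m∫₀ˢκ + A)²))^{1/2} for some integration constant A, on any interval where |m∫₀ˢκ + A| < 1. -/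
/-!
Write `f = τ/κ`. Since `κ² + τ² = κ²(1 + f²)`, the hypothesis says `f' / (1 + f²)^{3/2} = m κ`,
and the left side is the derivative of `g = f/√(1 + f²)`. Hence `g(s) = m∫₀ˢκ + g(0)`, and
inverting `g = f/√(1 + f²)` for `f ≥ 0` gives `f = √(g²/(1 - g²))`.
-/

open Real Set

lemma rpow_three_halves_eq_sqrt_pow {a : ℝ} (ha : 0 ≤ a) : a ^ ((3 : ℝ) / 2) = √a ^ 3 := by
  rw [sqrt_eq_rpow, ← rpow_natCast, ← rpow_mul ha]
  norm_num

lemma sq_div_rpow_three_halves_sq_add_sq {κ : ℝ} (hκ : 0 < κ) (τ : ℝ) :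
    κ ^ 2 / (κ ^ 2 + τ ^ 2) ^ ((3 : ℝ) / 2) = (κ * √(1 + (τ / κ) ^ 2) ^ 3)⁻¹ := by
  have hsum : κ ^ 2 + τ ^ 2 = κ ^ 2 * (1 + (τ / κ) ^ 2) := by field_simp
  rw [rpow_three_halves_eq_sqrt_pow (by positivity), hsum, sqrt_mul (by positivity),
    sqrt_sq hκ.le]
  field_simp

lemma hasDerivAt_div_sqrt_one_add_sq {f : ℝ → ℝ} {f' x : ℝ} (hf : HasDerivAt f f' x) :
    HasDerivAt (fun y => f y / √(1 + f y ^ 2)) (f' / √(1 + f x ^ 2) ^ 3) x := by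
  have hpos : 0 < 1 + f x ^ 2 := by positivity
  have hS : √(1 + f x ^ 2) ^ 2 = 1 + f x ^ 2 := sq_sqrt hpos.le
  have hsqrt : HasDerivAt (fun y => √(1 + f y ^ 2)) (f x * f' / √(1 + f x ^ 2)) x := by
    convert ((hf.fun_pow 2).const_add 1).sqrt hpos.ne' using 1
    field_simp
    ring
  refine (hf.div hsqrt (sqrt_pos.mpr hpos).ne').congr_deriv ?_
  field_simp
  linear_combination f' * hS

lemma sqrt_sq_div_one_sub_sq_of_div_sqrt {f : ℝ} (hf : 0 ≤ f) :
    √((f / √(1 + f ^ 2)) ^ 2 / (1 - (f / √(1 + f ^ 2)) ^ 2)) = f := by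
  have hpos : 0 < 1 + f ^ 2 := by positivity
  rw [div_pow, sq_sqrt hpos.le]
  convert sqrt_sq hf using 2
  field_simp
  ring

lemma Set.OrdConnected.eq_integral_add_of_hasDerivAt {I : Set ℝ} (hI : I.OrdConnected) {a b : ℝ}
    (ha : a ∈ I) (hb : b ∈ I) {g g' : ℝ → ℝ} (hg : ∀ x ∈ I, HasDerivAt g (g' x) x)
    (hg' : ContinuousOn g' I) :
    g b = (∫ x in a..b, g' x) + g a := by
  have hsub : uIcc a b ⊆ I := hI.uIcc_subset ha hb
  rw [intervalIntegral.integral_eq_sub_of_hasDerivAt (fun x hx => hg x (hsub hx))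
    ((hg'.mono hsub).intervalIntegrable)]
  ring

theorem slant_helix_torsion_formula_general
    (I : Set ℝ) (hIc : I.OrdConnected) (h0 : (0 : ℝ) ∈ I)
    (κ τ : ℝ → ℝ)
    (hκ : ContDiffOn ℝ 1 κ I) (hκpos : ∀ s ∈ I, 0 < κ s)
    (hτκd : ∀ s ∈ I, DifferentiableAt ℝ (fun u => τ u / κ u) s)
    (hτκnonneg : ∀ s ∈ I, 0 ≤ τ s / κ s)
    (m : ℝ)
    (hσ : ∀ s ∈ I, (κ s) ^ 2 / ((κ s) ^ 2 + (τ s) ^ 2) ^ ((3 : ℝ) / 2) *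
      deriv (fun u => τ u / κ u) s = m) :
    ∃ A : ℝ, ∀ s ∈ I, |m * (∫ u in (0 : ℝ)..s, κ u) + A| < 1 →
      τ s = κ s * Real.sqrt ((m * (∫ u in (0 : ℝ)..s, κ u) + A) ^ 2 /
        (1 - (m * (∫ u in (0 : ℝ)..s, κ u) + A) ^ 2)) := by
  set f : ℝ → ℝ := fun u => τ u / κ u
  set g : ℝ → ℝ := fun s => f s / √(1 + f s ^ 2)
  have hg : ∀ s ∈ I, HasDerivAt g (m * κ s) s := by
    intro s hs
    convert hasDerivAt_div_sqrt_one_add_sq (hτκd s hs).hasDerivAt using 1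
    have hσs := hσ s hs
    rw [sq_div_rpow_three_halves_sq_add_sq (hκpos s hs)] at hσs
    rw [← hσs]
    simp only [f]
    field_simp [(hκpos s hs).ne']
  refine ⟨g 0, fun s hs _ => ?_⟩
  have hgs : m * (∫ u in (0 : ℝ)..s, κ u) + g 0 = g s := by
    rw [hIc.eq_integral_add_of_hasDerivAt h0 hs hg (continuousOn_const.mul hκ.continuousOn),
      intervalIntegral.integral_const_mul]
  rw [hgs, sqrt_sq_div_one_sub_sq_of_div_sqrt (hτκnonneg s hs)]
  field_simp [(hκpos s hs).ne']

/-- If `(κ²/(κ²+τ²)^{3/2})·(τ/κ)' = m` for a nonzero constant `m` and `τ/κ ≥ 0`, then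
`τ = κ·√((m∫₀ˢκ + A)²/(1-(m∫₀ˢκ + A)²))` for some integration constant `A`, wherever
`|m∫₀ˢκ + A| < 1`. -/
theorem slant_helix_torsion_formula
    (I : Set ℝ) (hI : IsOpen I) (hIc : I.OrdConnected) (h0 : (0 : ℝ) ∈ I)
    (κ τ : ℝ → ℝ)
    (hκ : ContDiffOn ℝ 1 κ I) (hκpos : ∀ s ∈ I, 0 < κ s)
    (hτ : ContinuousOn τ I)
    (hτκd : ∀ s ∈ I, DifferentiableAt ℝ (fun u => τ u / κ u) s)
    (hτκnonneg : ∀ s ∈ I, 0 ≤ τ s / κ s)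
    (m : ℝ) (hm : m ≠ 0)
    (hσ : ∀ s ∈ I, (κ s) ^ 2 / ((κ s) ^ 2 + (τ s) ^ 2) ^ ((3 : ℝ) / 2) *
      deriv (fun u => τ u / κ u) s = m) :
    ∃ A : ℝ, ∀ s ∈ I, |m * (∫ u in (0 : ℝ)..s, κ u) + A| < 1 →
      τ s = κ s * Real.sqrt ((m * (∫ u in (0 : ℝ)..s, κ u) + A) ^ 2 /
        (1 - (m * (∫ u in (0 : ℝ)..s, κ u) + A) ^ 2)) :=
  slant_helix_torsion_formula_general I hIc h0 κ τ hκ hκpos hτκd hτκnonneg m hσ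
end
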